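/- For every $T>0$ there exists a constant $C>0$ such that for all $\lambda>0$, $s>0$ and $t\in(0,T]$: $\int_0^t \left( (t-\tau)\lambda^s (\ln \lambda)^2 \left((t-\tau)\lambda^s - 1\right) e^{-\lambda^s (t-\tau)} \right)^2 d\tau \le \frac{C}{s^4}$. (The integrand is the square of $\partial^2_{ss} e^{-\lambda^s(t-\tau)}$.) -/

import Mathlib

/-!
Write `μ = λ^s` and `φ x = x (x - 1) e^{-x}`. The integrand is `(ln λ)⁴ φ(μ (t - τ))²` and
`(ln λ)⁴ = (ln μ)⁴ / s⁴`, so it suffices to bound `(ln μ)⁴ ∫₀ᵗ φ(μ u)² du = (ln μ)⁴ μ⁻¹ ∫₀^{μt} φ²`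
uniformly in `μ > 0` and `t ≤ T`. For `μ ≥ 1` the exponential decay `φ² ≤ 26 e^{-x}` bounds the
last integral by `26`, and `(ln μ)⁴ / μ ≤ 4!`. For `μ ≤ 1` the finite horizon is what helps:
`φ² ≤ x²` gives `(ln μ)⁴ μ² t³ / 3`, and `(ln μ)⁴ μ ≤ 4!`.
-/

open Real
open scoped Nat

lemma pow_mul_exp_neg_le_factorial {x : ℝ} (hx : 0 ≤ x) (n : ℕ) : x ^ n * exp (-x) ≤ n ! := by
  rw [exp_neg, ← div_eq_mul_inv, div_le_iff₀ (exp_pos x)]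
  have h := pow_div_factorial_le_exp x hx n
  rwa [div_le_iff₀ (by positivity), mul_comm] at h

lemma log_pow_div_le_factorial {y : ℝ} (hy : 1 ≤ y) (n : ℕ) : log y ^ n / y ≤ n ! := by
  have h := pow_mul_exp_neg_le_factorial (log_nonneg hy) n
  rwa [exp_neg, exp_log (by positivity), ← div_eq_mul_inv] at h

lemma neg_log_pow_mul_le_factorial {y : ℝ} (hy₀ : 0 < y) (hy₁ : y ≤ 1) (n : ℕ) :
    (-log y) ^ n * y ≤ n ! := by
  have h := pow_mul_exp_neg_le_factorial (neg_nonneg.mpr (log_nonpos hy₀.le hy₁)) n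
  rwa [neg_neg, exp_log hy₀] at h

/-- `∂²ₛₛ e^{-λ^s r} = (log λ)² · secondDerivProfile (λ^s r)`. -/
noncomputable def secondDerivProfile (x : ℝ) : ℝ := x * (x - 1) * exp (-x)

@[fun_prop]
lemma continuous_secondDerivProfile : Continuous secondDerivProfile := by
  unfold secondDerivProfile; fun_prop

lemma secondDerivProfile_sq_le_exp_neg {x : ℝ} (hx : 0 ≤ x) :
    secondDerivProfile x ^ 2 ≤ 26 * exp (-x) := by
  have h4 := pow_mul_exp_neg_le_factorial hx 4
  have h2 := pow_mul_exp_neg_le_factorial hx 2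
  norm_num [Nat.factorial] at h4 h2
  have hpoly : (x * (x - 1)) ^ 2 ≤ x ^ 4 + x ^ 2 := by nlinarith [pow_nonneg hx 3]
  have hexp : exp (-x) ≤ 1 := exp_le_one_iff.mpr (by linarith)
  calc secondDerivProfile x ^ 2 = (x * (x - 1)) ^ 2 * exp (-x) * exp (-x) := by
        unfold secondDerivProfile; ring
    _ ≤ (x ^ 4 + x ^ 2) * exp (-x) * exp (-x) := by gcongr
    _ ≤ 26 * exp (-x) := by gcongr; linarith

lemma secondDerivProfile_sq_le_sq {x : ℝ} (hx : 0 ≤ x) : secondDerivProfile x ^ 2 ≤ x ^ 2 := by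
  have h : |(x - 1) * exp (-x)| ≤ 1 := by
    rw [abs_mul, abs_of_pos (exp_pos _), ← le_div_iff₀ (exp_pos _), exp_neg, div_inv_eq_mul,
      one_mul, abs_le]
    constructor <;> linarith [add_one_le_exp x, one_le_exp hx]
  calc secondDerivProfile x ^ 2 = x ^ 2 * |(x - 1) * exp (-x)| ^ 2 := by
        rw [sq_abs]; unfold secondDerivProfile; ring
    _ ≤ x ^ 2 * 1 ^ 2 := by gcongr
    _ = x ^ 2 := by ring

lemma integral_secondDerivProfile_sq_le_const {a : ℝ} (ha : 0 ≤ a) :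
    ∫ x in (0 : ℝ)..a, secondDerivProfile x ^ 2 ≤ 26 := by
  have hexp : ∫ x in (0 : ℝ)..a, exp (-x) ≤ 1 := by
    simpa using intervalIntegral_pow_mul_exp_neg_le (k := 0) ha one_pos
  calc ∫ x in (0 : ℝ)..a, secondDerivProfile x ^ 2 ≤ ∫ x in (0 : ℝ)..a, 26 * exp (-x) :=
        intervalIntegral.integral_mono_on ha
          (by apply Continuous.intervalIntegrable; fun_prop)
          (by apply Continuous.intervalIntegrable; fun_prop)
          fun x hx => secondDerivProfile_sq_le_exp_neg hx.1
    _ ≤ 26 := by rw [intervalIntegral.integral_const_mul]; linarith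

lemma integral_secondDerivProfile_sq_le_cube {a : ℝ} (ha : 0 ≤ a) :
    ∫ x in (0 : ℝ)..a, secondDerivProfile x ^ 2 ≤ a ^ 3 / 3 := by
  calc ∫ x in (0 : ℝ)..a, secondDerivProfile x ^ 2 ≤ ∫ x in (0 : ℝ)..a, x ^ 2 :=
        intervalIntegral.integral_mono_on ha
          (by apply Continuous.intervalIntegrable; fun_prop)
          (by apply Continuous.intervalIntegrable; fun_prop)
          fun x hx => secondDerivProfile_sq_le_sq hx.1
    _ = a ^ 3 / 3 := by norm_num [integral_pow]

lemma log_pow_four_mul_integral_secondDerivProfile_sq_le {μ t T : ℝ} (hμ : 0 < μ) (ht : 0 ≤ t)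
    (htT : t ≤ T) :
    log μ ^ 4 * ∫ u in (0 : ℝ)..t, secondDerivProfile (μ * u) ^ 2 ≤ 624 + 8 * T ^ 3 := by
  have hT : 0 ≤ T := ht.trans htT
  rw [intervalIntegral.integral_comp_mul_left (fun x => secondDerivProfile x ^ 2) hμ.ne',
    mul_zero, smul_eq_mul, ← mul_assoc, ← div_eq_mul_inv]
  have hμt : 0 ≤ μ * t := by positivity
  rcases le_total 1 μ with hμ₁ | hμ₁
  · calc log μ ^ 4 / μ * ∫ x in (0 : ℝ)..μ * t, secondDerivProfile x ^ 2 ≤ 24 * 26 := by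
          gcongr
          · exact intervalIntegral.integral_nonneg hμt fun x _ => sq_nonneg _
          · exact_mod_cast log_pow_div_le_factorial hμ₁ 4
          · exact integral_secondDerivProfile_sq_le_const hμt
      _ ≤ 624 + 8 * T ^ 3 := by nlinarith [pow_nonneg hT 3]
  · have hlog : log μ ^ 4 * μ ≤ 24 := by
      simpa [Even.neg_pow (by decide : Even 4), Nat.factorial] using
        neg_log_pow_mul_le_factorial hμ hμ₁ 4
    calc log μ ^ 4 / μ * ∫ x in (0 : ℝ)..μ * t, secondDerivProfile x ^ 2
        ≤ log μ ^ 4 / μ * ((μ * t) ^ 3 / 3) := by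
          gcongr; exact integral_secondDerivProfile_sq_le_cube hμt
      _ = log μ ^ 4 * μ * μ * t ^ 3 / 3 := by field_simp
      _ ≤ 24 * 1 * T ^ 3 / 3 := by gcongr
      _ ≤ 624 + 8 * T ^ 3 := by linarith

/-- Itô-isometry estimate for the second `s`-derivative of the stochastic convolution mode:
`∫₀ᵗ ((t-τ) λ^s (ln λ)² ((t-τ)λ^s - 1) e^{-λ^s (t-τ)})² dτ ≤ C/s⁴`
uniformly in `λ > 0` and `t ∈ (0,T]`. -/
theorem stmt17 (T : ℝ) (hT : 0 < T) :
    ∃ C : ℝ, 0 < C ∧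
      ∀ lam s : ℝ, 0 < lam → 0 < s → ∀ t ∈ Set.Ioc (0 : ℝ) T,
        (∫ τ in (0 : ℝ)..t,
            ((t - τ) * lam ^ s * Real.log lam ^ 2 * ((t - τ) * lam ^ s - 1)
              * Real.exp (-(lam ^ s) * (t - τ))) ^ 2)
          ≤ C / s ^ 4 := by
  refine ⟨624 + 8 * T ^ 3, by positivity, fun lam s hlam hs t ht => ?_⟩
  have hμ : 0 < lam ^ s := by positivity
  have hintegrand : ∀ τ, ((t - τ) * lam ^ s * log lam ^ 2 * ((t - τ) * lam ^ s - 1)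
      * exp (-(lam ^ s) * (t - τ))) ^ 2
      = log lam ^ 4 * secondDerivProfile (lam ^ s * (t - τ)) ^ 2 := fun τ => by
    unfold secondDerivProfile; rw [neg_mul]; ring
  have hlog : log lam ^ 4 = log (lam ^ s) ^ 4 / s ^ 4 := by
    rw [log_rpow hlam]; field_simp
  simp_rw [hintegrand]
  rw [intervalIntegral.integral_const_mul,
    intervalIntegral.integral_comp_sub_left (fun u => secondDerivProfile (lam ^ s * u) ^ 2),
    sub_self, sub_zero, hlog, div_mul_eq_mul_div]
  gcongr
  exact log_pow_four_mul_integral_secondDerivProfile_sq_le hμ ht.1.le ht.2
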